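/- For every δ ∈ [0, 1/2] and every R1 ∈ [0, 2], one has R1/2 − h2(δ) ≤ 1 − h2(δ ⋆ h2⁻¹(1 − R1/2)); consequently max{ R1/2 − h2(δ), 1 − h2(δ ⋆ h2⁻¹(1 − R1/2)) } = 1 − h2(δ ⋆ h2⁻¹(1 − R1/2)). -/

import Mathlib

open MeasureTheory

/-- Binary entropy function (base 2), with the convention `0 * log₂ 0 = 0`
(automatic since `Real.logb 2 0 = 0`). -/
noncomputable def h2 (p : ℝ) : ℝ :=
  -(p * Real.logb 2 p) - (1 - p) * Real.logb 2 (1 - p)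

/-- Inverse of the binary entropy function: for `q ≥ 0`, the unique `r ∈ [0, 1/2]`
with `h2 r = q` (realized as the infimum of the solution set); `0` for `q < 0`. -/
noncomputable def h2inv (q : ℝ) : ℝ :=
  if q < 0 then 0 else sInf {r : ℝ | 0 ≤ r ∧ r ≤ 1 / 2 ∧ h2 r = q}

/-- Binary convolution `a ⋆ b = a(1-b) + (1-a)b`. -/
def bconv (a b : ℝ) : ℝ := a * (1 - b) + (1 - a) * b

/-! With `r = h2⁻¹(1 - R1/2)`, so that `h2 r = 1 - R1/2`, the claim is
`h2 (δ ⋆ r) ≤ h2 δ + h2 r`. If `δ + r ≤ 1/2` this follows from `δ ⋆ r ≤ δ + r`, monotonicity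
of `h2` on `[0, 1/2]` and subadditivity of `h2`. Otherwise the chord bound `2x ≤ h2 x` on
`[0, 1/2]` gives `h2 δ + h2 r ≥ 2(δ + r) > 1 ≥ h2 (δ ⋆ r)`. Both subadditivity and the chord
bound come from concavity of `h2` together with `h2 0 = 0`. -/

theorem ConcaveOn.mul_le_map_mul {b : ℝ} {f : ℝ → ℝ} (hf : ConcaveOn ℝ (Set.Icc 0 b) f)
    (hf0 : 0 ≤ f 0) {x t : ℝ} (hx : x ∈ Set.Icc 0 b) (ht0 : 0 ≤ t) (ht1 : t ≤ 1) :
    t * f x ≤ f (t * x) := by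
  have h := hf.2 ⟨le_rfl, hx.1.trans hx.2⟩ hx (sub_nonneg.2 ht1) ht0 (sub_add_cancel 1 t)
  simp only [smul_eq_mul, mul_zero, zero_add] at h
  nlinarith

theorem ConcaveOn.map_add_le {b : ℝ} {f : ℝ → ℝ} (hf : ConcaveOn ℝ (Set.Icc 0 b) f)
    (hf0 : 0 ≤ f 0) {x y : ℝ} (hx : 0 ≤ x) (hy : 0 ≤ y) (hxy : x + y ≤ b) :
    f (x + y) ≤ f x + f y := by
  rcases (add_nonneg hx hy).eq_or_lt with hs | hs
  · obtain ⟨rfl, rfl⟩ : x = 0 ∧ y = 0 := ⟨by linarith, by linarith⟩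
    simpa using hf0
  have hmem : x + y ∈ Set.Icc 0 b := ⟨hs.le, hxy⟩
  have hfx := hf.mul_le_map_mul hf0 hmem (div_nonneg hx hs.le)
    ((div_le_one hs).2 (le_add_of_nonneg_right hy))
  have hfy := hf.mul_le_map_mul hf0 hmem (div_nonneg hy hs.le)
    ((div_le_one hs).2 (le_add_of_nonneg_left hx))
  rw [div_mul_cancel₀ _ hs.ne'] at hfx hfy
  calc f (x + y) = x / (x + y) * f (x + y) + y / (x + y) * f (x + y) := by
        rw [← add_mul, ← add_div, div_self hs.ne', one_mul]
    _ ≤ f x + f y := add_le_add hfx hfy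

theorem h2_eq_binEntropy_div_log_two (p : ℝ) : h2 p = Real.binEntropy p / Real.log 2 := by
  rw [h2, Real.binEntropy, Real.log_inv, Real.log_inv, Real.logb, Real.logb]
  ring

theorem h2_zero : h2 0 = 0 := by simp [h2_eq_binEntropy_div_log_two]

theorem h2_one_half : h2 (1 / 2) = 1 := by
  rw [h2_eq_binEntropy_div_log_two, one_div, Real.binEntropy_two_inv,
    div_self (Real.log_pos one_lt_two).ne']

theorem h2_le_one (p : ℝ) : h2 p ≤ 1 := by
  rw [h2_eq_binEntropy_div_log_two, div_le_one (Real.log_pos one_lt_two)]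
  exact Real.binEntropy_le_log_two

theorem continuous_h2 : Continuous h2 := by
  simpa only [funext h2_eq_binEntropy_div_log_two] using
    Real.binEntropy_continuous.div_const (Real.log 2)

theorem h2_monotoneOn : MonotoneOn h2 (Set.Icc 0 (1 / 2)) := by
  intro a ha b hb hab
  rw [one_div] at ha hb
  rw [h2_eq_binEntropy_div_log_two, h2_eq_binEntropy_div_log_two]
  gcongr
  exact Real.binEntropy_strictMonoOn.monotoneOn ha hb hab

theorem concaveOn_h2 : ConcaveOn ℝ (Set.Icc 0 1) h2 := by
  have h_eq : h2 = fun p => (Real.log 2)⁻¹ • Real.binEntropy p := by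
    funext p
    rw [h2_eq_binEntropy_div_log_two, smul_eq_mul, div_eq_inv_mul]
  rw [h_eq]
  exact Real.strictConcave_binEntropy.concaveOn.smul (inv_nonneg.2 (Real.log_pos one_lt_two).le)

theorem two_mul_le_h2 {x : ℝ} (hx0 : 0 ≤ x) (hx : x ≤ 1 / 2) : 2 * x ≤ h2 x := by
  have h := concaveOn_h2.mul_le_map_mul h2_zero.ge (x := 1 / 2) ⟨by norm_num, by norm_num⟩ (by positivity) (by linarith : 2 * x ≤ 1)
  rwa [h2_one_half, mul_one, mul_one_div, mul_div_cancel_left₀ x two_ne_zero] at h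

theorem h2_add_le {x y : ℝ} (hx : 0 ≤ x) (hy : 0 ≤ y) (hxy : x + y ≤ 1) :
    h2 (x + y) ≤ h2 x + h2 y :=
  concaveOn_h2.map_add_le h2_zero.ge hx hy hxy

theorem h2_bconv_le_add {a b : ℝ} (ha : a ∈ Set.Icc (0 : ℝ) (1 / 2))
    (hb : b ∈ Set.Icc (0 : ℝ) (1 / 2)) : h2 (bconv a b) ≤ h2 a + h2 b := by
  obtain ⟨ha0, ha1⟩ := ha
  obtain ⟨hb0, hb1⟩ := hb
  by_cases hab : a + b ≤ 1 / 2
  · have hconv0 : 0 ≤ bconv a b := by unfold bconv; nlinarith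
    have hconv_le : bconv a b ≤ a + b := by unfold bconv; nlinarith
    calc h2 (bconv a b) ≤ h2 (a + b) :=
          h2_monotoneOn ⟨hconv0, hconv_le.trans hab⟩ ⟨add_nonneg ha0 hb0, hab⟩ hconv_le
      _ ≤ h2 a + h2 b := h2_add_le ha0 hb0 (by linarith)
  · linarith [two_mul_le_h2 ha0 ha1, two_mul_le_h2 hb0 hb1, h2_le_one (bconv a b)]

theorem h2inv_mem_and_h2_h2inv {q : ℝ} (hq : q ∈ Set.Icc (0 : ℝ) 1) :
    h2inv q ∈ Set.Icc (0 : ℝ) (1 / 2) ∧ h2 (h2inv q) = q := by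
  set S : Set ℝ := {r | 0 ≤ r ∧ r ≤ 1 / 2 ∧ h2 r = q}
  have hS : S = Set.Icc 0 (1 / 2) ∩ h2 ⁻¹' {q} := by
    ext r
    simp [S, and_assoc]
  have hne : S.Nonempty := by
    obtain ⟨r, hr, hrq⟩ := intermediate_value_Icc (by norm_num : (0 : ℝ) ≤ 1 / 2)
      continuous_h2.continuousOn (by rwa [h2_zero, h2_one_half])
    exact ⟨r, hr.1, hr.2, hrq⟩
  have hclosed : IsClosed S := by
    rw [hS]
    exact isClosed_Icc.inter (isClosed_singleton.preimage continuous_h2)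
  have hinf : h2inv q = sInf S := if_neg (not_lt.2 hq.1)
  obtain ⟨h0, h1, hq'⟩ := hinf ▸ hclosed.csInf_mem hne ⟨0, fun r hr => hr.1⟩
  exact ⟨⟨h0, h1⟩, hq'⟩

/-- For every `δ ∈ [0,1/2]` and `R1 ∈ [0,2]`:
`R1/2 − h2(δ) ≤ 1 − h2(δ ⋆ h2⁻¹(1 − R1/2))`, hence the max of the two
quantities equals the latter. -/
theorem stmt3 (δ R1 : ℝ) (hδ : δ ∈ Set.Icc (0 : ℝ) (1 / 2))
    (hR1 : R1 ∈ Set.Icc (0 : ℝ) 2) :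
    R1 / 2 - h2 δ ≤ 1 - h2 (bconv δ (h2inv (1 - R1 / 2))) ∧
    max (R1 / 2 - h2 δ) (1 - h2 (bconv δ (h2inv (1 - R1 / 2))))
      = 1 - h2 (bconv δ (h2inv (1 - R1 / 2))) := by
  obtain ⟨hr, hr_h2⟩ := h2inv_mem_and_h2_h2inv (q := 1 - R1 / 2)
    ⟨by linarith [hR1.2], by linarith [hR1.1]⟩
  have key : R1 / 2 - h2 δ ≤ 1 - h2 (bconv δ (h2inv (1 - R1 / 2))) := by
    linarith [h2_bconv_le_add hδ hr]
  exact ⟨key, max_eq_right key⟩
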